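/- Let G be an ample Hausdorff groupoid with compact unit space. The representation π: ℂF(G) → A(G) is surjective if and only if G is a group (i.e., G^{(0)} is a singleton). -/
import Mathlib


open scoped Classical

/-- A groupoid encoded as a "groupoid with zero": the partially defined composition is
totalised by declaring non-composable products to be `0`.  The actual groupoid elements are
the nonzero elements; the range and source of a nonzero `a` are `a * a⁻¹` and `a⁻¹ * a`. -/
class GroupoidZ (G : Type*) extends Mul G, Inv G, Zero G where
  zero_mul' : ∀ a : G, 0 * a = 0
  mul_zero' : ∀ a : G, a * 0 = 0
  inv_zero' : (0 : G)⁻¹ = 0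
  inv_inv' : ∀ a : G, a⁻¹⁻¹ = a
  mul_assoc' : ∀ a b c : G, a * b ≠ 0 → b * c ≠ 0 → a * b * c = a * (b * c)
  mul_ne_zero_iff' : ∀ a b : G, a ≠ 0 → b ≠ 0 → (a * b ≠ 0 ↔ a⁻¹ * a = b * b⁻¹)
  mul_inv_self_mul' : ∀ a : G, a * a⁻¹ * a = a
  mul_inv_rev' : ∀ a b : G, (a * b)⁻¹ = b⁻¹ * a⁻¹

/-- The unit space `G⁰`: the nonzero idempotents. -/
def unitSpace (G : Type*) [GroupoidZ G] : Set G := {e | e ≠ 0 ∧ e * e = e}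

/-- A bisection: a set of groupoid elements on which range and source are injective. -/
def IsBisection {G : Type*} [GroupoidZ G] (B : Set G) : Prop :=
  (0 : G) ∉ B ∧ (∀ a ∈ B, ∀ b ∈ B, a * a⁻¹ = b * b⁻¹ → a = b) ∧
    (∀ a ∈ B, ∀ b ∈ B, a⁻¹ * a = b⁻¹ * b → a = b)

/-- A set is full if its range and source images are the whole unit space. -/
def IsFull {G : Type*} [GroupoidZ G] (B : Set G) : Prop :=
  (fun a => a * a⁻¹) '' B = unitSpace G ∧ (fun a => a⁻¹ * a) '' B = unitSpace G

/-- Compact open bisection. -/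
def IsCOB {G : Type*} [GroupoidZ G] [TopologicalSpace G] (B : Set G) : Prop :=
  IsBisection B ∧ IsCompact B ∧ IsOpen B

/-- The product `AB = {αβ : (α,β) composable}` of two subsets of a groupoid. -/
def setMul {G : Type*} [GroupoidZ G] (A B : Set G) : Set G := Set.image2 (· * ·) A B \ {0}

/-- The inverse `B⁻¹ = {γ⁻¹ : γ ∈ B}` of a subset of a groupoid. -/
def setInv {G : Type*} [GroupoidZ G] (B : Set G) : Set G := Inv.inv '' B

/-- The topological full group `F(G)`: all full compact open bisections. -/
def fullBisections (G : Type*) [GroupoidZ G] [TopologicalSpace G] : Set (Set G) :=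
  {B | IsCOB B ∧ IsFull B}

/-- Indicator function `1_B : G → ℂ`. -/
noncomputable def indic {G : Type*} [GroupoidZ G] (B : Set G) : G → ℂ := Set.indicator B 1

/-- Convolution product on functions `G → ℂ`: `(f * g)(γ) = ∑_{αβ = γ} f(α) g(β)`. -/
noncomputable def convol {G : Type*} [GroupoidZ G] (f g : G → ℂ) : G → ℂ := fun γ =>
  if γ = 0 then 0 else ∑ᶠ p ∈ {p : G × G | p.1 * p.2 = γ}, f p.1 * g p.2

/-- The `*`-involution `f^*(γ) = conj (f (γ⁻¹))`. -/
noncomputable def starF {G : Type*} [GroupoidZ G] (f : G → ℂ) : G → ℂ := fun γ =>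
  (starRingEnd ℂ) (f γ⁻¹)

/-- An ample Hausdorff (étale) groupoid: Hausdorff, locally compact, continuous inversion
and (partial) multiplication, the unit space is open and closed, the range map is open,
and there is a basis of compact open bisections.  The adjoined `0` is an isolated point. -/
class AmpleGroupoid (G : Type*) [TopologicalSpace G] extends GroupoidZ G where
  t2' : T2Space G
  locallyCompact' : LocallyCompactSpace G
  isolated_zero' : IsOpen {(0 : G)}
  continuous_inv' : Continuous (fun a : G => a⁻¹)
  continuousOn_mul' : ContinuousOn (fun p : G × G => p.1 * p.2) {p : G × G | p.1 * p.2 ≠ 0}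
  isOpen_unitSpace' : IsOpen (unitSpace G)
  isClosed_unitSpace' : IsClosed (unitSpace G)
  isOpenMap_range' : ∀ B : Set G, IsOpen B → (0 : G) ∉ B → IsOpen ((fun a => a * a⁻¹) '' B)
  ample_basis' : ∀ (a : G) (U : Set G), a ≠ 0 → IsOpen U → a ∈ U →
    ∃ B : Set G, IsCOB B ∧ a ∈ B ∧ B ⊆ U

/-- The image `π(ℂF(G))` of the representation of the topological full group: the span of
the indicator functions of full compact open bisections. -/
noncomputable def spanFull (G : Type*) [GroupoidZ G] [TopologicalSpace G] :
    Submodule ℂ (G → ℂ) :=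
  Submodule.span ℂ {f | ∃ B ∈ fullBisections G, f = indic B}

/-- The Steinberg algebra `A(G)` (as a subspace of `G → ℂ`): the span of the indicator
functions of compact open bisections. -/
noncomputable def steinberg (G : Type*) [GroupoidZ G] [TopologicalSpace G] :
    Submodule ℂ (G → ℂ) :=
  Submodule.span ℂ {f | ∃ B : Set G, IsCOB B ∧ f = indic B}

section Helpers

open GroupoidZ

variable {G : Type*} [GroupoidZ G]

lemma gz_inv_ne_zero {a : G} (h : a ≠ 0) : a⁻¹ ≠ 0 := fun h0 => by
  have h1 := inv_inv' a
  rw [h0, inv_zero'] at h1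
  exact h h1.symm

lemma gz_range_mem {a : G} (h : a ≠ 0) : a * a⁻¹ ∈ unitSpace G := by
  have hr : a * a⁻¹ ≠ 0 := fun h0 => by
    have h1 := mul_inv_self_mul' a
    rw [h0, zero_mul'] at h1; exact h h1.symm
  refine ⟨hr, ?_⟩
  have h1 : a * a⁻¹ * a ≠ 0 := by rw [mul_inv_self_mul']; exact h
  have h2 := mul_assoc' (a * a⁻¹) a a⁻¹ h1 hr
  rw [← h2, mul_inv_self_mul']

lemma gz_source_mem {a : G} (h : a ≠ 0) : a⁻¹ * a ∈ unitSpace G := by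
  have h1 := gz_range_mem (gz_inv_ne_zero h)
  rwa [inv_inv'] at h1

lemma gz_unit_inv {e : G} (he : e ∈ unitSpace G) : e⁻¹ = e := by
  obtain ⟨hne, hid⟩ := he
  have hin : e⁻¹ ≠ 0 := gz_inv_ne_zero hne
  have h1 : e⁻¹ * e * e⁻¹ = e⁻¹ := by
    have h := mul_inv_self_mul' e⁻¹; rwa [inv_inv'] at h
  have hse : e⁻¹ * e ≠ 0 := fun h0 => by
    rw [h0, zero_mul'] at h1; exact hin h1.symm
  have hiv : e⁻¹ * e = e * e⁻¹ :=
    (mul_ne_zero_iff' e e hne hne).mp (by rw [hid]; exact hne)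
  have hii : e⁻¹ * e * e = e⁻¹ * e := by
    have h := mul_assoc' e⁻¹ e e hse (by rw [hid]; exact hne)
    rw [h, hid]
  have hi : e⁻¹ * e * e = e := by rw [hiv]; exact mul_inv_self_mul' e
  have hs : e⁻¹ * e = e := by rw [← hii, hi]
  rw [hs] at h1
  rw [← h1, ← hiv, hs]

lemma gz_unit_self_fiber {u : G} (hu : u ∈ unitSpace G) : u⁻¹ * u = u := by
  rw [gz_unit_inv hu]; exact hu.2

lemma gz_unit_fiber {u γ : G} (hγ : γ ∈ unitSpace G) (h : γ⁻¹ * γ = u) : γ = u := by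
  rw [gz_unit_self_fiber hγ] at h; exact h

variable [TopologicalSpace G]

lemma phi_const {u : G} (hu : u ∈ unitSpace G) {n : ℕ} (c : Fin n → ℂ) (B : Fin n → Set G)
    (hB : ∀ i, B i ∈ fullBisections G) :
    ∑ᶠ γ ∈ {γ : G | γ⁻¹ * γ = u}, (∑ i, c i • indic (B i)) γ = ∑ i, c i := by
  have hσ : ∀ i, ∃ b, b ∈ B i ∧ b⁻¹ * b = u := by
    intro i
    have h : u ∈ (fun a => a⁻¹ * a) '' B i := by rw [(hB i).2.2]; exact hu
    obtain ⟨b, hb, hbu⟩ := h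
    exact ⟨b, hb, hbu⟩
  choose σ hσmem hσsrc using hσ
  have huniq : ∀ i, ∀ γ ∈ B i, γ⁻¹ * γ = u → γ = σ i := by
    intro i γ hγ h
    exact (hB i).1.1.2.2 γ hγ (σ i) (hσmem i) (by rw [h, hσsrc i])
  set t : Finset G := Finset.image σ Finset.univ with ht
  rw [finsum_mem_eq_sum_of_inter_support_eq _ (t := t) ?hcond]
  case hcond =>
    ext γ
    constructor
    · rintro ⟨hfib, hsupp⟩
      refine ⟨?_, hsupp⟩
      have hne : (∑ i, c i • indic (B i)) γ ≠ 0 := hsupp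
      rw [Finset.sum_apply] at hne
      obtain ⟨i, _, hi⟩ := Finset.exists_ne_zero_of_sum_ne_zero hne
      have hγB : γ ∈ B i := by
        by_contra hγB
        rw [Pi.smul_apply, indic, Set.indicator_of_notMem hγB, smul_zero] at hi
        exact hi rfl
      have := huniq i γ hγB hfib
      rw [ht]
      simp only [Finset.coe_image, Set.mem_image, Finset.mem_coe]
      exact ⟨i, by simp, this.symm⟩
    · rintro ⟨hγt, hsupp⟩
      refine ⟨?_, hsupp⟩
      rw [ht] at hγt
      simp only [Finset.coe_image, Set.mem_image, Finset.mem_coe] at hγt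
      obtain ⟨i, -, rfl⟩ := hγt
      exact hσsrc i
  have hfilter : ∀ i, t.filter (fun γ => γ ∈ B i) = {σ i} := by
    intro i
    ext γ
    simp only [Finset.mem_filter, Finset.mem_singleton, ht, Finset.mem_image]
    constructor
    · rintro ⟨⟨j, -, rfl⟩, hγB⟩
      exact huniq i (σ j) hγB (hσsrc j)
    · rintro rfl
      exact ⟨⟨i, Finset.mem_univ i, rfl⟩, hσmem i⟩
  have hone : ∀ i, ∑ γ ∈ t, indic (B i) γ = 1 := by
    intro i
    have : ∑ γ ∈ t, indic (B i) γ = ∑ γ ∈ t.filter (fun γ => γ ∈ B i), 1 := by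
      rw [Finset.sum_filter]
      refine Finset.sum_congr rfl fun γ _ => ?_
      by_cases h : γ ∈ B i
      · rw [if_pos h, indic, Set.indicator_of_mem h, Pi.one_apply]
      · rw [if_neg h, indic, Set.indicator_of_notMem h]
    rw [this, hfilter i, Finset.sum_singleton]
  calc ∑ γ ∈ t, (∑ i, c i • indic (B i)) γ
      = ∑ γ ∈ t, ∑ i, c i * indic (B i) γ := by
        refine Finset.sum_congr rfl fun γ _ => ?_
        rw [Finset.sum_apply]
        exact Finset.sum_congr rfl fun i _ => rfl
    _ = ∑ i, ∑ γ ∈ t, c i * indic (B i) γ := Finset.sum_comm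
    _ = ∑ i, c i := by
        refine Finset.sum_congr rfl fun i _ => ?_
        rw [← Finset.mul_sum, hone i, mul_one]

lemma phi_indic_unit {u : G} (hu : u ∈ unitSpace G) {V : Set G} (hV : V ⊆ unitSpace G) :
    ∑ᶠ γ ∈ {γ : G | γ⁻¹ * γ = u}, indic V γ = if u ∈ V then 1 else 0 := by
  by_cases h : u ∈ V
  · rw [if_pos h, finsum_mem_eq_sum_of_inter_support_eq _ (t := {u}) ?hc, Finset.sum_singleton,
      indic, Set.indicator_of_mem h, Pi.one_apply]
    case hc =>
      ext γ
      constructor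
      · rintro ⟨hfib, hsupp⟩
        have hγV : γ ∈ V := by
          by_contra hγV
          exact hsupp (by rw [indic, Set.indicator_of_notMem hγV])
        have := gz_unit_fiber (hV hγV) hfib
        exact ⟨by simp [this], hsupp⟩
      · rintro ⟨hγ, hsupp⟩
        simp only [Finset.coe_singleton, Set.mem_singleton_iff] at hγ
        subst hγ
        exact ⟨gz_unit_self_fiber hu, hsupp⟩
  · rw [if_neg h, finsum_mem_eq_sum_of_inter_support_eq _ (t := ∅) ?hc, Finset.sum_empty]
    case hc =>
      ext γ
      simp only [Finset.coe_empty, Set.empty_inter, Set.mem_inter_iff, Set.mem_setOf_eq,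
        Set.mem_empty_iff_false, iff_false, not_and]
      intro hfib hsupp
      have hγV : γ ∈ V := by
        by_contra hγV
        exact hsupp (by rw [indic, Set.indicator_of_notMem hγV])
      exact h ((gz_unit_fiber (hV hγV) hfib) ▸ hγV)

end Helpers

/-- The representation `π : ℂF(G) → A(G)` is surjective (its image, the
span of indicators of full compact open bisections, is all of the Steinberg algebra) iff
`G` is a group, i.e. the unit space is a singleton. -/
theorem rep_surjective_iff_group {G : Type*} [TopologicalSpace G] [AmpleGroupoid G]
    (hcomp : IsCompact (unitSpace G)) (hne : ∃ a : G, a ≠ 0) :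
    spanFull G = steinberg G ↔ ∃ e : G, unitSpace G = {e} := by
  constructor
  · intro hspan
    by_contra hns
    obtain ⟨a, ha⟩ := hne
    have hu : a * a⁻¹ ∈ unitSpace G := gz_range_mem ha
    set u := a * a⁻¹ with hudef
    have hex : ∃ u', u' ∈ unitSpace G ∧ u' ≠ u := by
      by_contra h'
      push_neg at h'
      exact hns ⟨u, Set.eq_singleton_iff_unique_mem.mpr ⟨hu, h'⟩⟩
    obtain ⟨u', hu', hne'⟩ := hex
    haveI : T2Space G := AmpleGroupoid.t2'
    have hUopen : IsOpen (unitSpace G \ {u'}) :=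
      AmpleGroupoid.isOpen_unitSpace'.sdiff isClosed_singleton
    have huU : u ∈ unitSpace G \ {u'} := ⟨hu, fun h => hne' (by simpa using h.symm)⟩
    obtain ⟨V, hVcob, huV, hVsub⟩ :=
      AmpleGroupoid.ample_basis' u (unitSpace G \ {u'}) hu.1 hUopen huU
    have hVunit : V ⊆ unitSpace G := fun x hx => (hVsub hx).1
    have hu'V : u' ∉ V := fun h => (hVsub h).2 rfl
    have hmem : indic V ∈ steinberg G := Submodule.subset_span ⟨V, hVcob, rfl⟩
    rw [← hspan] at hmem
    obtain ⟨n, c, g, hrep⟩ := Submodule.mem_span_set'.mp hmem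
    have hBfull : ∀ i : Fin n, ∃ B ∈ fullBisections G, (g i : G → ℂ) = indic B :=
      fun i => (g i).2
    choose B hBmem hBg using hBfull
    have hrep' : (∑ i, c i • indic (B i)) = indic V := by
      rw [← hrep]
      exact Finset.sum_congr rfl fun i _ => by rw [hBg i]
    have h1 := phi_const hu c B hBmem
    have h2 := phi_const hu' c B hBmem
    rw [hrep'] at h1 h2
    rw [phi_indic_unit hu hVunit, if_pos huV] at h1
    rw [phi_indic_unit hu' hVunit, if_neg hu'V] at h2
    exact one_ne_zero (h1.trans h2.symm)
  · rintro ⟨e, he⟩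
    apply le_antisymm
    · exact Submodule.span_mono (by rintro f ⟨B, hB, rfl⟩; exact ⟨B, hB.1, rfl⟩)
    · rw [steinberg, Submodule.span_le]
      rintro f ⟨B, hB, rfl⟩
      rcases Set.eq_empty_or_nonempty B with h | h
      · rw [h]
        have hz : indic (∅ : Set G) = 0 := by
          ext γ; simp [indic]
        rw [hz]
        exact Submodule.zero_mem _
      · have h0 : ∀ b ∈ B, b ≠ 0 := fun b hb hb0 => hB.1.1 (hb0 ▸ hb)
        refine Submodule.subset_span ⟨B, ⟨hB, ?_, ?_⟩, rfl⟩
        · apply Set.Subset.antisymm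
          · rintro x ⟨b, hb, rfl⟩
            exact gz_range_mem (h0 b hb)
          · rw [he]
            rintro x rfl
            obtain ⟨b, hb⟩ := h
            have hbr : b * b⁻¹ ∈ unitSpace G := gz_range_mem (h0 b hb)
            rw [he] at hbr
            exact ⟨b, hb, hbr⟩
        · apply Set.Subset.antisymm
          · rintro x ⟨b, hb, rfl⟩
            exact gz_source_mem (h0 b hb)
          · rw [he]
            rintro x rfl
            obtain ⟨b, hb⟩ := h
            have hbs : b⁻¹ * b ∈ unitSpace G := gz_source_mem (h0 b hb)
            rw [he] at hbs
            exact ⟨b, hb, hbs⟩
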